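/- For two symmetric positive semi-definite N×N matrices K and L and λ > 0, the spectral norm of K(K + Nλ I)^{-1} − L(L + Nλ I)^{-1} is at most ‖K − L‖/(Nλ). -/

import Mathlib

/-!
With `μ = Nλ`, `A = K + μ` and `B = L + μ`, one has `K A⁻¹ = 1 - μ A⁻¹`, so by the resolvent
identity the difference equals `μ A⁻¹ (K - L) B⁻¹`. Positive semi-definiteness makes `A` and `B`
`μ`-coercive, whence `‖A⁻¹‖, ‖B⁻¹‖ ≤ μ⁻¹`.
-/

/-- The spectral (operator) norm of a real matrix. -/
noncomputable def specNorm {n : Type*} [Fintype n] [DecidableEq n] (A : Matrix n n ℝ) : ℝ :=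
  ‖Matrix.toEuclideanCLM (𝕜 := ℝ) A‖

open scoped Matrix.Norms.L2Operator RealInnerProductSpace

section Coercive

variable {E : Type*} [NormedAddCommGroup E] [InnerProductSpace ℝ E]

lemma mul_norm_le_norm_apply_of_coercive {T : E →L[ℝ] E} {μ : ℝ}
    (hT : ∀ x, μ * ‖x‖ ^ 2 ≤ ⟪x, T x⟫) (x : E) : μ * ‖x‖ ≤ ‖T x‖ := by
  rcases (norm_nonneg x).eq_or_lt with hx | hx
  · simp [← hx]
  · have : μ * ‖x‖ * ‖x‖ ≤ ‖T x‖ * ‖x‖ := by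
      nlinarith [hT x, real_inner_le_norm x (T x)]
    exact le_of_mul_le_mul_right this hx

lemma norm_le_inv_of_coercive_of_mul_eq_one {T S : E →L[ℝ] E} {μ : ℝ} (hμ : 0 < μ)
    (hT : ∀ x, μ * ‖x‖ ^ 2 ≤ ⟪x, T x⟫) (hTS : T * S = 1) : ‖S‖ ≤ μ⁻¹ := by
  refine S.opNorm_le_bound (inv_nonneg.2 hμ.le) fun y => ?_
  have h := mul_norm_le_norm_apply_of_coercive hT (S y)
  rw [← mul_apply_eq_comp, hTS, one_apply_eq_self] at h
  rwa [inv_mul_eq_div, le_div_iff₀' hμ]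

end Coercive

namespace Matrix

variable {n : Type*} [Fintype n] [DecidableEq n]

lemma mul_inv_add_smul_one {R : Type*} [CommRing R] {K : Matrix n n R} {μ : R}
    (hK : IsUnit (K + μ • 1).det) : K * (K + μ • 1)⁻¹ = 1 - μ • (K + μ • 1)⁻¹ :=
  calc K * (K + μ • 1)⁻¹ = (K + μ • 1 - μ • 1) * (K + μ • 1)⁻¹ := by rw [add_sub_cancel_right]
    _ = 1 - μ • (K + μ • 1)⁻¹ := by rw [sub_mul, mul_nonsing_inv _ hK, smul_mul, one_mul]

lemma mul_inv_add_smul_one_sub_mul_inv_add_smul_one {R : Type*} [CommRing R]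
    {K L : Matrix n n R} {μ : R} (hK : IsUnit (K + μ • 1).det) (hL : IsUnit (L + μ • 1).det) :
    K * (K + μ • 1)⁻¹ - L * (L + μ • 1)⁻¹
      = μ • ((K + μ • 1)⁻¹ * (K - L) * (L + μ • 1)⁻¹) := by
  have resolvent : (K + μ • 1)⁻¹ * (K - L) * (L + μ • 1)⁻¹ = (L + μ • 1)⁻¹ - (K + μ • 1)⁻¹ := by
    rw [← add_sub_add_right_eq_sub K L (μ • 1), mul_sub, nonsing_inv_mul _ hK, sub_mul, one_mul,
      mul_assoc, mul_nonsing_inv _ hL, mul_one]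
  rw [mul_inv_add_smul_one hK, mul_inv_add_smul_one hL, resolvent, smul_sub]
  abel

lemma PosSemidef.isUnit_det_add_smul_one {M : Matrix n n ℝ} (hM : M.PosSemidef) {μ : ℝ}
    (hμ : 0 < μ) : IsUnit (M + μ • 1).det :=
  (isUnit_iff_isUnit_det _).1 (PosDef.posSemidef_add hM (PosDef.one.smul hμ)).isUnit

lemma PosSemidef.coercive_toEuclideanCLM_add_smul_one {M : Matrix n n ℝ} (hM : M.PosSemidef)
    (μ : ℝ) (x : EuclideanSpace ℝ n) :
    μ * ‖x‖ ^ 2 ≤ ⟪x, toEuclideanCLM (𝕜 := ℝ) (M + μ • 1) x⟫ := by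
  have h := (isPositive_toEuclideanLin_iff.2 hM).inner_nonneg_right x
  rw [map_add, map_smul, map_one, _root_.add_apply, inner_add_right, _root_.smul_apply,
    one_apply_eq_self, real_inner_smul_right, real_inner_self_eq_norm_sq]
  exact le_add_of_nonneg_left h

lemma PosSemidef.norm_inv_add_smul_one_le {M : Matrix n n ℝ} (hM : M.PosSemidef) {μ : ℝ}
    (hμ : 0 < μ) : ‖(M + μ • 1)⁻¹‖ ≤ μ⁻¹ := by
  refine norm_le_inv_of_coercive_of_mul_eq_one hμ (hM.coercive_toEuclideanCLM_add_smul_one μ) ?_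
  have h := congrArg (toEuclideanCLM (n := n) (𝕜 := ℝ))
    (mul_nonsing_inv _ (hM.isUnit_det_add_smul_one hμ))
  rwa [map_mul, map_one] at h

lemma PosSemidef.norm_mul_inv_add_smul_one_sub_le {K L : Matrix n n ℝ} (hK : K.PosSemidef)
    (hL : L.PosSemidef) {μ : ℝ} (hμ : 0 < μ) :
    ‖K * (K + μ • 1)⁻¹ - L * (L + μ • 1)⁻¹‖ ≤ ‖K - L‖ / μ := by
  rw [mul_inv_add_smul_one_sub_mul_inv_add_smul_one (hK.isUnit_det_add_smul_one hμ)
    (hL.isUnit_det_add_smul_one hμ), norm_smul, Real.norm_of_nonneg hμ.le]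
  calc μ * ‖(K + μ • 1)⁻¹ * (K - L) * (L + μ • 1)⁻¹‖
      ≤ μ * (‖(K + μ • 1)⁻¹‖ * ‖K - L‖ * ‖(L + μ • 1)⁻¹‖) := by
        gcongr
        exact norm_mul₃_le
    _ ≤ μ * (μ⁻¹ * ‖K - L‖ * μ⁻¹) := by
        gcongr
        · exact hK.norm_inv_add_smul_one_le hμ
        · exact hL.norm_inv_add_smul_one_le hμ
    _ = ‖K - L‖ / μ := by field_simp

end Matrix

theorem stmt_3 (N : ℕ) (hN : 0 < N) (K L : Matrix (Fin N) (Fin N) ℝ)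
    (hK : K.PosSemidef) (hL : L.PosSemidef) (lam : ℝ) (hlam : 0 < lam) :
    specNorm (K * (K + ((N : ℝ) * lam) • (1 : Matrix (Fin N) (Fin N) ℝ))⁻¹
        - L * (L + ((N : ℝ) * lam) • (1 : Matrix (Fin N) (Fin N) ℝ))⁻¹)
      ≤ specNorm (K - L) / ((N : ℝ) * lam) :=
  -- `specNorm` is definitionally the norm of `Matrix.Norms.L2Operator`.
  hK.norm_mul_inv_add_smul_one_sub_le hL (by positivity)
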